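/- In the extra-special setting, any antichain in the poset Δ(1) has at most 3 elements, provided Δ is not of type A₁. More precisely, if γ₁, …, γ_k ∈ Δ(1) are pairwise incomparable roots of the same height (the middle height h/2, for Δ not of type A), then they are pairwise orthogonal, θ − Σγᵢ is a root in Δ(2−k), and k ≤ 3. -/

import Mathlib

variable {V : Type*} [NormedAddCommGroup V] [InnerProductSpace ℝ V]

/-- Data of a reduced crystallographic root system `Δ` in a Euclidean space, together with a
choice of positive system `Δ⁺` and the corresponding simple roots `Π`. -/
structure RootSystemData (V : Type*) [NormedAddCommGroup V] [InnerProductSpace ℝ V] where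
  roots : Finset V
  pos : Finset V
  simples : Finset V
  zero_not_mem : (0 : V) ∉ roots
  neg_mem : ∀ γ ∈ roots, -γ ∈ roots
  reduced : ∀ γ ∈ roots, ∀ c : ℝ, c • γ ∈ roots → c = 1 ∨ c = -1
  crystallographic : ∀ γ ∈ roots, ∀ δ ∈ roots,
    ∃ n : ℤ, 2 * (inner ℝ γ δ : ℝ) / (inner ℝ δ δ : ℝ) = (n : ℝ)
  reflect_mem : ∀ γ ∈ roots, ∀ δ ∈ roots,
    γ - (2 * (inner ℝ γ δ : ℝ) / (inner ℝ δ δ : ℝ)) • δ ∈ roots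
  pos_subset : pos ⊆ roots
  pos_or_neg : ∀ γ ∈ roots, γ ∈ pos ∨ -γ ∈ pos
  pos_neg_disjoint : ∀ γ ∈ pos, -γ ∉ pos
  simples_subset : simples ⊆ pos
  simples_indep : LinearIndependent ℝ (fun α : {x // x ∈ simples} => (α : V))
  pos_combo : ∀ γ ∈ pos, ∃ c : V → ℕ, γ = ∑ α ∈ simples, (c α : ℝ) • α

/-- Irreducibility: the roots admit no partition into two nonempty mutually orthogonal parts. -/
def RootSystemData.Irreducible (R : RootSystemData V) : Prop :=
  ∀ A B : Set V, A ∪ B = ↑R.roots → Disjoint A B →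
    (∀ a ∈ A, ∀ b ∈ B, (inner ℝ a b : ℝ) = 0) → A = ∅ ∨ B = ∅

/-- The reflection in the hyperplane orthogonal to `δ`. -/
noncomputable def reflAt (δ : V) : Function.End V :=
  fun x => x - (2 * (inner ℝ x δ : ℝ) / (inner ℝ δ δ : ℝ)) • δ

/-- The Weyl group, generated by the reflections in the roots (each reflection is an
involution, so the closure as a monoid of endomorphisms coincides with the generated group). -/
def weylGroup (R : RootSystemData V) : Submonoid (Function.End V) :=
  Submonoid.closure {f | ∃ δ ∈ R.roots, f = reflAt δ}

/-- The inversion set `N(w) = {γ ∈ Δ⁺ : w(γ) < 0}`. -/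
def invSet (R : RootSystemData V) (w : Function.End V) : Set V :=
  {γ | γ ∈ R.pos ∧ -(w γ) ∈ R.pos}

/-- The pairing `(γ, θ∨) = 2(γ,θ)/(θ,θ)`. -/
noncomputable def copair (θ γ : V) : ℝ := 2 * (inner ℝ γ θ : ℝ) / (inner ℝ θ θ : ℝ)

/-- `μ ≤ γ` iff `γ − μ` is a nonnegative integer combination of the simple roots lying in
the subset `Z`. -/
def rootLEon (simples : Finset V) (Z : Set V) (μ γ : V) : Prop :=
  ∃ c : V → ℕ, (∀ α, α ∉ Z → c α = 0) ∧ γ = μ + ∑ α ∈ simples, (c α : ℝ) • α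

/-- `Δ(1) = {γ ∈ Δ⁺ : (γ, θ∨) = 1}`, the positive roots at level one. -/
noncomputable def levelOnePos (R : RootSystemData V) (θ : V) : Set V :=
  {γ | γ ∈ R.pos ∧ copair θ γ = 1}

/-!
Incomparable roots `γ ≠ δ` of `Δ(1)` are orthogonal or add up to `θ`: if `(γ, δ) > 0` then
`δ - γ` is a root of `Δ(0)`, which makes them comparable, and if `(γ, δ) < 0` then `γ + δ` is a
root of level `2`. A pair adding up to `θ` leaves no room for a third root in an antichain (it
would be orthogonal to `θ`), and for roots of height `h / 2` it is excluded since `ht θ = h - 1`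
is odd. For pairwise orthogonal incomparable `γ₁, …, γ_k`, subtracting them from `θ` one at a
time stays inside `Δ`, so `θ - Σ γᵢ` is a root of level `2 - k`. As `-θ` is the only root of
level `≤ -2`, `k ≤ 4`, and `k = 4` would force `Σ γᵢ = 2θ`; but then two of the three roots
`θ - γ₁ - γⱼ` of `Δ(0)` have the same sign, and their sum `±(γₗ - γ₁)` makes `γ₁` and `γₗ`
comparable.
-/

open RealInnerProductSpace Finset

section Copair

variable (θ : V)

lemma copair_add (x y : V) : copair θ (x + y) = copair θ x + copair θ y := by
  simp only [copair, inner_add_left, mul_add, add_div]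

lemma copair_neg (x : V) : copair θ (-x) = -copair θ x := by
  simp only [copair, inner_neg_left, mul_neg, neg_div]

lemma copair_sub (x y : V) : copair θ (x - y) = copair θ x - copair θ y := by
  simp only [copair, inner_sub_left, mul_sub, sub_div]

lemma copair_smul (c : ℝ) (x : V) : copair θ (c • x) = c * copair θ x := by
  simp only [copair, real_inner_smul_left]
  ring

lemma copair_sum {ι : Type*} (s : Finset ι) (f : ι → V) :
    copair θ (∑ i ∈ s, f i) = ∑ i ∈ s, copair θ (f i) := by
  simp only [copair, sum_inner, Finset.mul_sum, Finset.sum_div]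

variable {θ}

lemma copair_self (hθ : θ ≠ 0) : copair θ θ = 2 := by
  rw [copair, mul_div_assoc, div_self (inner_self_ne_zero.mpr hθ), mul_one]

lemma inner_eq_half_of_copair_eq_one {γ : V} (hθ : θ ≠ 0) (h : copair θ γ = 1) :
    ⟪γ, θ⟫ = ⟪θ, θ⟫ / 2 := by
  have hθθ : ⟪θ, θ⟫ ≠ 0 := inner_self_ne_zero.mpr hθ
  rw [copair, div_eq_one_iff_eq hθθ] at h
  linarith

end Copair

section RootLE

variable {s : Finset V} {Z : Set V} {x y μ ν : V}

lemma rootLEon_of_zero_sub (h : rootLEon s Z 0 (y - x)) : rootLEon s Z x y := by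
  obtain ⟨c, hZ, hc⟩ := h
  exact ⟨c, hZ, by rw [← zero_add (∑ α ∈ s, _), ← hc, add_sub_cancel]⟩

lemma rootLEon_zero_add (hμ : rootLEon s Z 0 μ) (hν : rootLEon s Z 0 ν) :
    rootLEon s Z 0 (μ + ν) := by
  obtain ⟨c, hcZ, rfl⟩ := hμ
  obtain ⟨d, hdZ, rfl⟩ := hν
  refine ⟨c + d, fun α hα => by simp [hcZ α hα, hdZ α hα], ?_⟩
  simp only [zero_add, Pi.add_apply, Nat.cast_add, add_smul, sum_add_distrib]

end RootLE

namespace RootSystemData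

variable (R : RootSystemData V)

lemma ne_zero_of_mem_roots {γ : V} (hγ : γ ∈ R.roots) : γ ≠ 0 := by
  rintro rfl
  exact R.zero_not_mem hγ

/-- If the Cartan integers of `γ` and `δ` were both `≤ -2`, then `‖γ + δ‖² ≤ 0`. -/
lemma add_mem_roots_of_inner_neg {γ δ : V} (hγ : γ ∈ R.roots) (hδ : δ ∈ R.roots)
    (hneg : ⟪γ, δ⟫ < 0) (hne : γ ≠ -δ) : γ + δ ∈ R.roots := by
  have le_neg_two : ∀ {x y : V} {n : ℤ}, x ≠ 0 → 2 * ⟪y, x⟫ / ⟪x, x⟫ = n → n ≠ -1 →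
      ⟪y, x⟫ < 0 → ⟪y, x⟫ ≤ -⟪x, x⟫ := by
    intro x y n hx hn hn1 hyx
    have hxx : 0 < ⟪x, x⟫ := real_inner_self_pos.mpr hx
    have : (n : ℝ) < 0 := hn ▸ div_neg_of_neg_of_pos (by linarith) hxx
    have : n < 0 := by exact_mod_cast this
    have : (n : ℝ) ≤ -2 := by exact_mod_cast (by omega : n ≤ -2)
    rw [← hn, div_le_iff₀ hxx] at this
    linarith
  obtain ⟨m, hm⟩ := R.crystallographic γ hγ δ hδ
  obtain ⟨n, hn⟩ := R.crystallographic δ hδ γ hγ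
  by_cases hm1 : m = -1
  · have := R.reflect_mem γ hγ δ hδ
    rw [hm, hm1] at this
    simpa using this
  by_cases hn1 : n = -1
  · have := R.reflect_mem δ hδ γ hγ
    rw [hn, hn1] at this
    simpa [add_comm] using this
  have hδδ := le_neg_two (R.ne_zero_of_mem_roots hδ) hm hm1 hneg
  have hγγ := le_neg_two (R.ne_zero_of_mem_roots hγ) hn hn1 (by rwa [real_inner_comm])
  rw [real_inner_comm] at hγγ
  refine absurd (eq_neg_of_add_eq_zero_left (real_inner_self_nonpos.mp ?_)) hne
  rw [real_inner_add_add_self]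
  linarith

lemma sub_mem_roots_of_inner_pos {γ δ : V} (hγ : γ ∈ R.roots) (hδ : δ ∈ R.roots)
    (hpos : 0 < ⟪γ, δ⟫) (hne : γ ≠ δ) : γ - δ ∈ R.roots := by
  rw [sub_eq_add_neg]
  exact R.add_mem_roots_of_inner_neg hγ (R.neg_mem δ hδ) (by rwa [inner_neg_right, neg_lt_zero])
    (by rwa [neg_neg])

lemma coeff_eq_of_sum_smul_eq {f g : V → ℝ}
    (h : ∑ α ∈ R.simples, f α • α = ∑ α ∈ R.simples, g α • α) :
    ∀ α ∈ R.simples, f α = g α :=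
  (linearIndepOn_finset_iffₛ (s := R.simples) (v := id)).mp R.simples_indep f g h

lemma ht_add {ht : V → ℕ}
    (hht : ∀ γ ∈ R.pos, ∃ c : V → ℕ,
        γ = ∑ α ∈ R.simples, (c α : ℝ) • α ∧ ∑ α ∈ R.simples, c α = ht γ)
    {γ δ : V} (hγ : γ ∈ R.pos) (hδ : δ ∈ R.pos) (hγδ : γ + δ ∈ R.pos) :
    ht (γ + δ) = ht γ + ht δ := by
  obtain ⟨c, hc, hcs⟩ := hht _ hγδ
  obtain ⟨d, hd, hds⟩ := hht γ hγ
  obtain ⟨e, he, hes⟩ := hht δ hδ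
  have hcoeff := R.coeff_eq_of_sum_smul_eq (f := fun α => (c α : ℝ))
    (g := fun α => ((d α + e α : ℕ) : ℝ)) (by
      simp only [Nat.cast_add, add_smul, sum_add_distrib]
      rw [← hc, ← hd, ← he])
  rw [← hcs, ← hds, ← hes, ← sum_add_distrib]
  exact sum_congr rfl fun α hα => by exact_mod_cast hcoeff α hα

abbrev levelLE (θ : V) : V → V → Prop :=
  rootLEon R.simples {α | copair θ α = 0}

variable {θ : V}

lemma eq_of_mem_pos_of_mem_simples (hθ : θ ∈ R.simples)
    (hhigh : ∀ γ ∈ R.pos, ∃ c : V → ℕ, θ = γ + ∑ α ∈ R.simples, (c α : ℝ) • α)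
    {γ : V} (hγ : γ ∈ R.pos) : γ = θ := by
  classical
  obtain ⟨c, hc⟩ := hhigh γ hγ
  obtain ⟨d, hd⟩ := R.pos_combo γ hγ
  have hcoeff := R.coeff_eq_of_sum_smul_eq (f := fun α => (d α + c α : ℝ))
    (g := fun α => if α = θ then 1 else 0) (by
      simp only [add_smul, sum_add_distrib, ite_smul, one_smul, zero_smul, sum_ite_eq', if_pos hθ]
      rw [← hd, ← hc])
  have hγθ : γ = (d θ : ℝ) • θ := by
    rw [hd, sum_eq_single_of_mem θ hθ]
    intro α hα hne
    have := hcoeff α hα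
    simp only [if_neg hne] at this
    rw [show d α = 0 by exact_mod_cast (add_eq_zero_iff_of_nonneg (by positivity)
      (by positivity)).mp this |>.1, Nat.cast_zero, zero_smul]
  rcases R.reduced θ (R.pos_subset (R.simples_subset hθ)) _ (hγθ ▸ R.pos_subset hγ) with h | h
  · rw [hγθ, h, one_smul]
  · linarith [Nat.cast_nonneg (α := ℝ) (d θ)]

lemma notMem_simples_of_two_lt_card (hA1 : 2 < R.roots.card)
    (hhigh : ∀ γ ∈ R.pos, ∃ c : V → ℕ, θ = γ + ∑ α ∈ R.simples, (c α : ℝ) • α) :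
    θ ∉ R.simples := by
  classical
  intro hθ
  have hsub : R.roots ⊆ {θ, -θ} := by
    intro γ hγ
    rcases R.pos_or_neg γ hγ with hp | hn
    · simp [R.eq_of_mem_pos_of_mem_simples hθ hhigh hp]
    · simp [← R.eq_of_mem_pos_of_mem_simples hθ hhigh hn]
  have := (card_le_card hsub).trans card_le_two
  omega

lemma copair_nonneg_of_mem_simples (hA1 : 2 < R.roots.card)
    (hhigh : ∀ γ ∈ R.pos, ∃ c : V → ℕ, θ = γ + ∑ α ∈ R.simples, (c α : ℝ) • α)
    (hextra : ∀ γ ∈ R.pos, copair θ γ = 0 ∨ copair θ γ = 1 ∨ γ = θ)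
    {α : V} (hα : α ∈ R.simples) : 0 ≤ copair θ α := by
  rcases hextra α (R.simples_subset hα) with h | h | rfl
  · exact h.ge
  · exact h ▸ zero_le_one
  · exact absurd hα (R.notMem_simples_of_two_lt_card hA1 hhigh)

lemma zero_levelLE_of_copair_eq_zero (hnonneg : ∀ α ∈ R.simples, 0 ≤ copair θ α)
    {γ : V} (hγ : γ ∈ R.pos) (h0 : copair θ γ = 0) :
    R.levelLE θ 0 γ := by
  classical
  obtain ⟨c, hc⟩ := R.pos_combo γ hγ
  have hterm : ∀ α ∈ R.simples, (c α : ℝ) * copair θ α = 0 := by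
    rw [hc, copair_sum] at h0
    simp only [copair_smul] at h0
    exact (sum_eq_zero_iff_of_nonneg fun α hα => mul_nonneg (by positivity) (hnonneg α hα)).mp h0
  refine ⟨fun α => if copair θ α = 0 then c α else 0, fun α hα => if_neg hα, ?_⟩
  rw [zero_add, hc]
  refine sum_congr rfl fun α hα => ?_
  dsimp only
  split_ifs with h
  · rfl
  · rw [(mul_eq_zero.mp (hterm α hα)).resolve_right h, Nat.cast_zero]

lemma levelLE_or_levelLE_of_sub_mem_roots (hnonneg : ∀ α ∈ R.simples, 0 ≤ copair θ α)
    {γ δ : V} (hδγ : δ - γ ∈ R.roots) (h0 : copair θ (δ - γ) = 0) :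
    R.levelLE θ γ δ ∨ R.levelLE θ δ γ := by
  rcases R.pos_or_neg _ hδγ with hp | hn
  · exact Or.inl (rootLEon_of_zero_sub (R.zero_levelLE_of_copair_eq_zero hnonneg hp h0))
  · rw [neg_sub] at hn
    refine Or.inr (rootLEon_of_zero_sub (R.zero_levelLE_of_copair_eq_zero hnonneg hn ?_))
    rw [copair_sub] at h0 ⊢
    linarith

lemma mem_roots_cases (hextra : ∀ γ ∈ R.pos, copair θ γ = 0 ∨ copair θ γ = 1 ∨ γ = θ)
    {γ : V} (hγ : γ ∈ R.roots) : γ = θ ∨ γ = -θ ∨ |copair θ γ| ≤ 1 := by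
  rcases R.pos_or_neg γ hγ with hp | hn
  · rcases hextra γ hp with h | h | h
    · exact .inr (.inr (by rw [h]; norm_num))
    · exact .inr (.inr (by rw [h]; norm_num))
    · exact .inl h
  · rcases hextra _ hn with h | h | h
    · exact .inr (.inr (by rw [← abs_neg, ← copair_neg, h]; norm_num))
    · exact .inr (.inr (by rw [← abs_neg, ← copair_neg, h]; norm_num))
    · exact .inr (.inl (neg_eq_iff_eq_neg.mp h))

lemma eq_of_copair_eq_two (hθ : θ ≠ 0)
    (hextra : ∀ γ ∈ R.pos, copair θ γ = 0 ∨ copair θ γ = 1 ∨ γ = θ)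
    {γ : V} (hγ : γ ∈ R.roots) (h2 : copair θ γ = 2) : γ = θ := by
  rcases R.mem_roots_cases hextra hγ with h | h | h
  · exact h
  · rw [h, copair_neg, copair_self hθ] at h2
    norm_num at h2
  · rw [h2] at h
    norm_num at h

/-- The reflection of `θ = γ + δ` in `γ` is `δ - γ`, a root of `Δ(0)`. -/
lemma add_ne_of_inner_eq_zero (hθ : θ ∈ R.roots) (hnonneg : ∀ α ∈ R.simples, 0 ≤ copair θ α)
    {γ δ : V} (hγ : γ ∈ levelOnePos R θ) (hδ : δ ∈ levelOnePos R θ) (horth : ⟪γ, δ⟫ = 0)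
    (hγδ : ¬ R.levelLE θ γ δ) (hδγ : ¬ R.levelLE θ δ γ) : γ + δ ≠ θ := by
  intro hsum
  have hγr := R.pos_subset hγ.1
  have hrefl : θ - (2 * ⟪θ, γ⟫ / ⟪γ, γ⟫) • γ = δ - γ := by
    rw [← hsum, inner_add_left, real_inner_comm γ δ, horth, add_zero, mul_div_assoc,
      div_self (inner_self_ne_zero.mpr (R.ne_zero_of_mem_roots hγr)), mul_one, two_smul]
    abel
  have hroot := hrefl ▸ R.reflect_mem θ hθ γ hγr
  exact (R.levelLE_or_levelLE_of_sub_mem_roots hnonneg hroot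
    (by rw [copair_sub, hγ.2, hδ.2, sub_self])).elim hγδ hδγ

lemma inner_eq_zero_or_add_eq (hθ : θ ≠ 0)
    (hextra : ∀ γ ∈ R.pos, copair θ γ = 0 ∨ copair θ γ = 1 ∨ γ = θ)
    (hnonneg : ∀ α ∈ R.simples, 0 ≤ copair θ α)
    {γ δ : V} (hγ : γ ∈ levelOnePos R θ) (hδ : δ ∈ levelOnePos R θ) (hne : γ ≠ δ)
    (hγδ : ¬ R.levelLE θ γ δ) (hδγ : ¬ R.levelLE θ δ γ) : ⟪γ, δ⟫ = 0 ∨ γ + δ = θ := by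
  have hγr := R.pos_subset hγ.1
  have hδr := R.pos_subset hδ.1
  rcases lt_trichotomy ⟪γ, δ⟫ 0 with hlt | h0 | hgt
  · refine .inr (R.eq_of_copair_eq_two hθ hextra (R.add_mem_roots_of_inner_neg hγr hδr hlt ?_) ?_)
    · rintro rfl
      have := hγ.2
      rw [copair_neg, hδ.2] at this
      norm_num at this
    · rw [copair_add, hγ.2, hδ.2]
      norm_num
  · exact .inl h0
  · have hroot := R.sub_mem_roots_of_inner_pos hδr hγr (by rwa [real_inner_comm]) hne.symm
    exact ((R.levelLE_or_levelLE_of_sub_mem_roots hnonneg hroot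
      (by rw [copair_sub, hγ.2, hδ.2, sub_self])).elim hγδ hδγ).elim

lemma pairwise_inner_eq_zero_of_two_lt_card (hθ : θ ≠ 0)
    (hextra : ∀ γ ∈ R.pos, copair θ γ = 0 ∨ copair θ γ = 1 ∨ γ = θ)
    (hnonneg : ∀ α ∈ R.simples, 0 ≤ copair θ α)
    {Γ : Finset V} (hΓ : ↑Γ ⊆ levelOnePos R θ) (hanti : IsAntichain (R.levelLE θ) (Γ : Set V))
    (hcard : 2 < Γ.card) : (Γ : Set V).Pairwise fun γ δ => ⟪γ, δ⟫ = 0 := by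
  classical
  have horth_or_sum : ∀ γ ∈ Γ, ∀ δ ∈ Γ, γ ≠ δ → ⟪γ, δ⟫ = 0 ∨ γ + δ = θ := fun γ hγ δ hδ hne =>
    R.inner_eq_zero_or_add_eq hθ hextra hnonneg (hΓ hγ) (hΓ hδ) hne
      (hanti hγ hδ hne) (hanti hδ hγ hne.symm)
  intro γ hγ δ hδ hne
  refine (horth_or_sum γ hγ δ hδ hne).resolve_right fun hsum => ?_
  obtain ⟨ε, hε, hεδ⟩ := exists_mem_ne (s := Γ.erase γ) (by rw [card_erase_of_mem hγ]; omega) δ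
  obtain ⟨hεγ, hε⟩ := mem_erase.mp hε
  have hεγ' : ⟪ε, γ⟫ = 0 := (horth_or_sum ε hε γ hγ hεγ).resolve_right fun h =>
    hεδ (add_right_cancel (h.trans (hsum.symm.trans (add_comm γ δ))))
  have hεδ' : ⟪ε, δ⟫ = 0 := (horth_or_sum ε hε δ hδ hεδ).resolve_right fun h =>
    hεγ (add_right_cancel (h.trans hsum.symm))
  have hεθ : ⟪ε, θ⟫ = 0 := by rw [← hsum, inner_add_right, hεγ', hεδ', zero_add]
  have := inner_eq_half_of_copair_eq_one hθ (hΓ hε).2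
  linarith [real_inner_self_pos.mpr hθ]

lemma copair_theta_sub_sum (hθ : θ ≠ 0) {Γ : Finset V} (hΓ : ↑Γ ⊆ levelOnePos R θ) :
    copair θ (θ - ∑ γ ∈ Γ, γ) = 2 - Γ.card := by
  rw [copair_sub, copair_self hθ, copair_sum, sum_congr rfl fun γ hγ => (hΓ hγ).2, sum_const,
    nsmul_one]

lemma theta_sub_sum_mem_roots (hθ : θ ∈ R.roots) (hnonneg : ∀ α ∈ R.simples, 0 ≤ copair θ α)
    {Γ : Finset V} (hΓ : ↑Γ ⊆ levelOnePos R θ)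
    (horth : (Γ : Set V).Pairwise fun γ δ => ⟪γ, δ⟫ = 0)
    (hanti : IsAntichain (R.levelLE θ) (Γ : Set V)) : θ - ∑ γ ∈ Γ, γ ∈ R.roots := by
  classical
  induction Γ using Finset.induction_on with
  | empty => simpa using hθ
  | insert a Γ ha ih =>
    rw [coe_insert] at hΓ horth hanti
    have hθ0 := R.ne_zero_of_mem_roots hθ
    have hΓa : ∀ γ ∈ Γ, ⟪γ, a⟫ = 0 := fun γ hγ =>
      horth (Set.mem_insert_of_mem _ hγ) (Set.mem_insert _ _) (by rintro rfl; exact ha hγ)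
    obtain ⟨hal, hΓl⟩ := Set.insert_subset_iff.mp hΓ
    have hβ := ih hΓl (horth.mono (Set.subset_insert _ _)) (hanti.subset (Set.subset_insert _ _))
    have hβa : 0 < ⟪θ - ∑ γ ∈ Γ, γ, a⟫ := by
      rw [inner_sub_left, sum_inner, sum_eq_zero hΓa, sub_zero, real_inner_comm,
        inner_eq_half_of_copair_eq_one hθ0 hal.2]
      linarith [real_inner_self_pos.mpr hθ0]
    have hne : θ - ∑ γ ∈ Γ, γ ≠ a := by
      intro heq
      have hcard := R.copair_theta_sub_sum hθ0 hΓl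
      rw [heq, hal.2] at hcard
      obtain ⟨b, rfl⟩ := card_eq_one.mp (by exact_mod_cast (by linarith : (Γ.card : ℝ) = 1))
      have hb : b ∈ insert a (({b} : Finset V) : Set V) := by simp
      have hab : b ≠ a := fun h => ha (h ▸ mem_singleton_self b)
      refine R.add_ne_of_inner_eq_zero hθ hnonneg (hΓl (by simp)) hal
        (hΓa b (mem_singleton_self b)) (hanti hb (Set.mem_insert _ _) hab)
        (hanti (Set.mem_insert _ _) hb hab.symm) ?_
      rw [← heq, sum_singleton, add_sub_cancel]
    rw [sum_insert ha, sub_add_eq_sub_sub_swap]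
    exact R.sub_mem_roots_of_inner_pos hβ (R.pos_subset hal.1) hβa hne

lemma sum_ne_add_self_of_card_eq_four (hθ : θ ∈ R.roots)
    (hnonneg : ∀ α ∈ R.simples, 0 ≤ copair θ α)
    {Γ : Finset V} (hΓ : ↑Γ ⊆ levelOnePos R θ)
    (horth : (Γ : Set V).Pairwise fun γ δ => ⟪γ, δ⟫ = 0)
    (hanti : IsAntichain (R.levelLE θ) (Γ : Set V)) (hcard : Γ.card = 4) :
    ∑ γ ∈ Γ, γ ≠ θ + θ := by
  classical
  obtain ⟨a, b, c, d, hab, hac, had, hbc, hbd, hcd, rfl⟩ := card_eq_four.mp hcard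
  intro hsum
  rw [sum_insert (by simp [hab, hac, had]), sum_insert (by simp [hbc, hbd]), sum_pair hcd,
    ← add_assoc, ← add_assoc] at hsum
  have hsign : ∀ x ∈ ({a, b, c, d} : Finset V), x ≠ a →
      R.levelLE θ 0 (θ - (a + x)) ∨ R.levelLE θ 0 (-(θ - (a + x))) := by
    intro x hx hxa
    have hsub : (({a, x} : Finset V) : Set V) ⊆ ({a, b, c, d} : Finset V) := by
      rw [coe_subset]
      exact insert_subset (by simp) (singleton_subset_iff.mpr hx)
    have hroot := R.theta_sub_sum_mem_roots hθ hnonneg (hsub.trans hΓ) (horth.mono hsub)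
      (hanti.subset hsub)
    have hcop := R.copair_theta_sub_sum (R.ne_zero_of_mem_roots hθ) (hsub.trans hΓ)
    rw [sum_pair hxa.symm] at hroot hcop
    rw [card_pair hxa.symm, Nat.cast_two, sub_self] at hcop
    rcases R.pos_or_neg _ hroot with hp | hn
    · exact .inl (R.zero_levelLE_of_copair_eq_zero hnonneg hp hcop)
    · exact .inr (R.zero_levelLE_of_copair_eq_zero hnonneg hn
        (by rw [copair_neg, hcop, neg_zero]))
  have hsame : ∀ x y z, z ∈ ({a, b, c, d} : Finset V) → z ≠ a → a + x + y + z = θ + θ →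
      ¬ (R.levelLE θ 0 (θ - (a + x)) ∧ R.levelLE θ 0 (θ - (a + y))) ∧
      ¬ (R.levelLE θ 0 (-(θ - (a + x))) ∧ R.levelLE θ 0 (-(θ - (a + y)))) := by
    intro x y z hz hza h
    have ha : a ∈ (({a, b, c, d} : Finset V) : Set V) := by simp
    refine ⟨fun ⟨hx, hy⟩ => hanti ha hz hza.symm (rootLEon_of_zero_sub ?_),
      fun ⟨hx, hy⟩ => hanti hz ha hza (rootLEon_of_zero_sub ?_)⟩
    · convert rootLEon_zero_add hx hy using 1
      linear_combination (norm := module) h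
    · convert rootLEon_zero_add hx hy using 1
      linear_combination (norm := module) -h
  have hbc := hsame b c d (by simp) had.symm hsum
  have hbd := hsame b d c (by simp) hac.symm (by rw [← hsum]; abel)
  have hcd := hsame c d b (by simp) hab.symm (by rw [← hsum]; abel)
  -- two of the three signs agree
  rcases hsign b (by simp) hab.symm with hb | hb <;>
    rcases hsign c (by simp) hac.symm with hc | hc <;>
    rcases hsign d (by simp) had.symm with hd | hd
  all_goals first
    | exact hbc.1 ⟨hb, hc⟩ | exact hbc.2 ⟨hb, hc⟩ | exact hbd.1 ⟨hb, hd⟩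
    | exact hbd.2 ⟨hb, hd⟩ | exact hcd.1 ⟨hc, hd⟩ | exact hcd.2 ⟨hc, hd⟩

lemma card_le_three_of_pairwise_inner_eq_zero (hθ : θ ∈ R.roots)
    (hextra : ∀ γ ∈ R.pos, copair θ γ = 0 ∨ copair θ γ = 1 ∨ γ = θ)
    (hnonneg : ∀ α ∈ R.simples, 0 ≤ copair θ α)
    {Γ : Finset V} (hΓ : ↑Γ ⊆ levelOnePos R θ)
    (horth : (Γ : Set V).Pairwise fun γ δ => ⟪γ, δ⟫ = 0)
    (hanti : IsAntichain (R.levelLE θ) (Γ : Set V)) : Γ.card ≤ 3 := by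
  have hθ0 := R.ne_zero_of_mem_roots hθ
  have hroot := R.theta_sub_sum_mem_roots hθ hnonneg hΓ horth hanti
  have hcop := R.copair_theta_sub_sum hθ0 hΓ
  by_contra! h4
  have h4' : (4 : ℝ) ≤ Γ.card := by exact_mod_cast h4
  rcases R.mem_roots_cases hextra hroot with h | h | h
  · rw [h, copair_self hθ0] at hcop
    linarith
  · rw [h, copair_neg, copair_self hθ0] at hcop
    refine R.sum_ne_add_self_of_card_eq_four hθ hnonneg hΓ horth hanti
      (by exact_mod_cast (by linarith : (Γ.card : ℝ) = 4)) ?_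
    linear_combination (norm := module) -h
  · rw [hcop, abs_le] at h
    linarith [h.1]

lemma card_le_three_of_isAntichain (hθ : θ ∈ R.roots)
    (hextra : ∀ γ ∈ R.pos, copair θ γ = 0 ∨ copair θ γ = 1 ∨ γ = θ)
    (hnonneg : ∀ α ∈ R.simples, 0 ≤ copair θ α)
    {Γ : Finset V} (hΓ : ↑Γ ⊆ levelOnePos R θ) (hanti : IsAntichain (R.levelLE θ) (Γ : Set V)) :
    Γ.card ≤ 3 := by
  by_cases hcard : Γ.card ≤ 2
  · omega
  · exact R.card_le_three_of_pairwise_inner_eq_zero hθ hextra hnonneg hΓ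
      (R.pairwise_inner_eq_zero_of_two_lt_card (R.ne_zero_of_mem_roots hθ) hextra hnonneg hΓ
        hanti (by omega)) hanti

end RootSystemData

theorem extraSpecial_antichain_le_three_general (R : RootSystemData V)
    (hA1 : 2 < R.roots.card)
    (θ : V) (hθ : θ ∈ R.pos)
    (hhigh : ∀ γ ∈ R.pos, ∃ c : V → ℕ, θ = γ + ∑ α ∈ R.simples, (c α : ℝ) • α)
    (hextra : ∀ γ ∈ R.pos, copair θ γ = 0 ∨ copair θ γ = 1 ∨ γ = θ)
    (ht : V → ℕ)
    (hht : ∀ γ ∈ R.pos, ∃ c : V → ℕ,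
        γ = ∑ α ∈ R.simples, (c α : ℝ) • α ∧ ∑ α ∈ R.simples, c α = ht γ)
    (h : ℕ) (hcox : h = ht θ + 1) (heven : Even h) :
    (∀ Γ : Finset V, ↑Γ ⊆ levelOnePos R θ →
        IsAntichain (rootLEon R.simples {α | copair θ α = 0}) (Γ : Set V) → Γ.card ≤ 3) ∧
    (∀ (k : ℕ) (γ : Fin k → V), Function.Injective γ →
        (∀ i, γ i ∈ levelOnePos R θ) →
        (∀ i, ht (γ i) = h / 2) →
        (∀ i j, i ≠ j → ¬ rootLEon R.simples {α | copair θ α = 0} (γ i) (γ j)) →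
        (∀ i j, i ≠ j → (inner ℝ (γ i) (γ j) : ℝ) = 0) ∧
        (θ - ∑ i, γ i) ∈ R.roots ∧
        copair θ (θ - ∑ i, γ i) = 2 - (k : ℝ) ∧
        k ≤ 3) := by
  classical
  have hθr := R.pos_subset hθ
  have hnonneg : ∀ α ∈ R.simples, 0 ≤ copair θ α := fun _ =>
    R.copair_nonneg_of_mem_simples hA1 hhigh hextra
  refine ⟨fun Γ => R.card_le_three_of_isAntichain hθr hextra hnonneg, ?_⟩
  intro k γ hinj hγ hhtγ hinc
  have horth : ∀ i j, i ≠ j → ⟪γ i, γ j⟫ = 0 := fun i j hij =>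
    (R.inner_eq_zero_or_add_eq (R.ne_zero_of_mem_roots hθr) hextra hnonneg (hγ i) (hγ j)
      (hinj.ne hij) (hinc i j hij) (hinc j i hij.symm)).resolve_right fun hsum => by
        have := R.ht_add hht (hγ i).1 (hγ j).1 (hsum ▸ hθ)
        rw [hsum, hhtγ, hhtγ] at this
        obtain ⟨r, rfl⟩ := heven
        omega
  have hΓ : ↑(univ.image γ) ⊆ levelOnePos R θ := by
    simpa [Set.range_subset_iff] using hγ
  have hΓorth : (↑(univ.image γ) : Set V).Pairwise fun x y => ⟪x, y⟫ = 0 := by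
    rw [coe_image, coe_univ, hinj.injOn.pairwise_image]
    exact fun i _ j _ => horth i j
  have hanti : IsAntichain (R.levelLE θ) ↑(univ.image γ) := by
    rw [IsAntichain, coe_image, coe_univ, hinj.injOn.pairwise_image]
    exact fun i _ j _ => hinc i j
  have hsum : ∑ x ∈ univ.image γ, x = ∑ i, γ i := sum_image fun i _ j _ h => hinj h
  have hcard : (univ.image γ).card = k := by rw [card_image_of_injective _ hinj, card_fin]
  have hcop := R.copair_theta_sub_sum (R.ne_zero_of_mem_roots hθr) hΓ
  rw [hsum, hcard] at hcop
  exact ⟨horth, hsum ▸ R.theta_sub_sum_mem_roots hθr hnonneg hΓ hΓorth hanti, hcop,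
    hcard ▸ R.card_le_three_of_isAntichain hθr hextra hnonneg hΓ hanti⟩

/-- Extra-special setting for `Δ` irreducible, not of type `A₁` (i.e. with more than two
roots), with highest root `θ`, height function `ht` and (even, for `Δ` not of type `A`)
Coxeter number `h = ht θ + 1`. Any antichain in the weight poset `Δ(1)` has at most `3`
elements; more precisely, pairwise incomparable roots `γ₁, …, γ_k ∈ Δ(1)` of the middle
height `h/2` are pairwise orthogonal, `θ − Σ γᵢ` is a root lying in `Δ(2 − k)`, and
`k ≤ 3`. -/
theorem extraSpecial_antichain_le_three (R : RootSystemData V) (hirr : R.Irreducible)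
    (hA1 : 2 < R.roots.card)
    (θ : V) (hθ : θ ∈ R.pos)
    (hhigh : ∀ γ ∈ R.pos, ∃ c : V → ℕ, θ = γ + ∑ α ∈ R.simples, (c α : ℝ) • α)
    (hextra : ∀ γ ∈ R.pos, copair θ γ = 0 ∨ copair θ γ = 1 ∨ γ = θ)
    (ht : V → ℕ)
    (hht : ∀ γ ∈ R.pos, ∃ c : V → ℕ,
        γ = ∑ α ∈ R.simples, (c α : ℝ) • α ∧ ∑ α ∈ R.simples, c α = ht γ)
    (h : ℕ) (hcox : h = ht θ + 1) (heven : Even h) :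
    (∀ Γ : Finset V, ↑Γ ⊆ levelOnePos R θ →
        IsAntichain (rootLEon R.simples {α | copair θ α = 0}) (Γ : Set V) → Γ.card ≤ 3) ∧
    (∀ (k : ℕ) (γ : Fin k → V), Function.Injective γ →
        (∀ i, γ i ∈ levelOnePos R θ) →
        (∀ i, ht (γ i) = h / 2) →
        (∀ i j, i ≠ j → ¬ rootLEon R.simples {α | copair θ α = 0} (γ i) (γ j)) →
        (∀ i j, i ≠ j → (inner ℝ (γ i) (γ j) : ℝ) = 0) ∧
        (θ - ∑ i, γ i) ∈ R.roots ∧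
        copair θ (θ - ∑ i, γ i) = 2 - (k : ℝ) ∧
        k ≤ 3) :=
  extraSpecial_antichain_le_three_general R hA1 θ hθ hhigh hextra ht hht h hcox heven
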